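/- The forgetful erasure from EffHOL to HOL preserves derivability; consequently, if intuitionistic HOL is consistent (⊬ ⊥ where ⊥ := ∀u:⋆. u↑, the universally quantified base membership), then the EffHOL-style extension with program quantifiers, type quantifiers, and a monadic modality is also consistent. -/

import Mathlib

/-! ## Target: intuitionistic HOL (with base comprehension and base membership) -/

inductive HSrt : Type
  | star : HSrt
  | pred : HSrt → HSrt

mutual
  inductive HTm : Type
    | var : ℕ → HTm
    | comp : HSrt → HProp → HTm
    | compBase : HProp → HTm

  inductive HProp : Type
    | mem : HTm → HTm → HProp
    | memBase : HTm → HProp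
    | imp : HProp → HProp → HProp
    | all : HSrt → HProp → HProp
end

mutual
  def HTm.lift (d : ℕ) : HTm → HTm
    | .var n => if n < d then .var n else .var (n + 1)
    | .comp s ψ => .comp s (HProp.lift (d + 1) ψ)
    | .compBase ψ => .compBase (HProp.lift d ψ)

  def HProp.lift (d : ℕ) : HProp → HProp
    | .mem t c => .mem (HTm.lift d t) (HTm.lift d c)
    | .memBase t => .memBase (HTm.lift d t)
    | .imp a b => .imp (HProp.lift d a) (HProp.lift d b)
    | .all s ψ => .all s (HProp.lift (d + 1) ψ)
end

mutual
  def HTm.subst (d : ℕ) (u : HTm) : HTm → HTm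
    | .var n => if n < d then .var n else if n = d then u else .var (n - 1)
    | .comp s ψ => .comp s (HProp.subst (d + 1) (u.lift 0) ψ)
    | .compBase ψ => .compBase (HProp.subst d u ψ)

  def HProp.subst (d : ℕ) (u : HTm) : HProp → HProp
    | .mem t c => .mem (HTm.subst d u t) (HTm.subst d u c)
    | .memBase t => .memBase (HTm.subst d u t)
    | .imp a b => .imp (HProp.subst d u a) (HProp.subst d u b)
    | .all s ψ => .all s (HProp.subst (d + 1) (u.lift 0) ψ)
end

/-- The deduction system of intuitionistic HOL. -/
inductive HDeriv : List HProp → HProp → Prop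
  | id {Ψ ψ} : ψ ∈ Ψ → HDeriv Ψ ψ
  | impI {Ψ ψ₁ ψ₂} : HDeriv (ψ₁ :: Ψ) ψ₂ → HDeriv Ψ (.imp ψ₁ ψ₂)
  | impE {Ψ ψ₁ ψ₂} : HDeriv Ψ (.imp ψ₁ ψ₂) → HDeriv Ψ ψ₁ → HDeriv Ψ ψ₂
  | allI {Ψ s ψ} : HDeriv (Ψ.map (HProp.lift 0)) ψ → HDeriv Ψ (.all s ψ)
  | allE {Ψ s ψ} (t : HTm) : HDeriv Ψ (.all s ψ) → HDeriv Ψ (HProp.subst 0 t ψ)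
  | memI {Ψ s ψ t} : HDeriv Ψ (HProp.subst 0 t ψ) → HDeriv Ψ (.mem t (.comp s ψ))
  | memE {Ψ s ψ t} : HDeriv Ψ (.mem t (.comp s ψ)) → HDeriv Ψ (HProp.subst 0 t ψ)
  | memBaseI {Ψ ψ} : HDeriv Ψ ψ → HDeriv Ψ (.memBase (.compBase ψ))
  | memBaseE {Ψ ψ} : HDeriv Ψ (.memBase (.compBase ψ)) → HDeriv Ψ ψ

/-- Falsity in HOL: `⊥ := ∀u:⋆. u↑` (universally quantified base membership). -/
def hbot : HProp := .all .star (.memBase (.var 0))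

/-! ## Source: an EffHOL-style extension with kinds, types, programs, indices,
expressions and specifications, featuring program quantifiers, type
quantifiers, expression quantifiers and a monadic modality.
There are three separate de Bruijn namespaces: type variables, program
variables, and expression variables. -/

inductive Kd : Type
  | star : Kd
  | karr : Kd → Kd

inductive Ty : Type
  | var : ℕ → Ty
  | app : Ty → Ty → Ty
  | lam : Kd → Ty → Ty
  | arr : Ty → Ty → Ty
  | all : Kd → Ty → Ty
  | comp : Ty → Ty

def Ty.liftT (d : ℕ) : Ty → Ty
  | .var n => if n < d then .var n else .var (n + 1)
  | .app a b => .app (a.liftT d) (b.liftT d)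
  | .lam κ t => .lam κ (t.liftT (d + 1))
  | .arr a b => .arr (a.liftT d) (b.liftT d)
  | .all κ t => .all κ (t.liftT (d + 1))
  | .comp t => .comp (t.liftT d)

def Ty.substT (d : ℕ) (u : Ty) : Ty → Ty
  | .var n => if n < d then .var n else if n = d then u else .var (n - 1)
  | .app a b => .app (Ty.substT d u a) (Ty.substT d u b)
  | .lam κ t => .lam κ (Ty.substT (d + 1) (u.liftT 0) t)
  | .arr a b => .arr (Ty.substT d u a) (Ty.substT d u b)
  | .all κ t => .all κ (Ty.substT (d + 1) (u.liftT 0) t)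
  | .comp t => .comp (Ty.substT d u t)

/-- Indices (the "sorts" of expressions). -/
inductive Idx : Type
  | base : Ty → Idx
  | pred : Ty → Idx → Idx
  | all : Kd → Idx → Idx

def Idx.liftT (d : ℕ) : Idx → Idx
  | .base τ => .base (τ.liftT d)
  | .pred τ σ => .pred (τ.liftT d) (σ.liftT d)
  | .all κ σ => .all κ (σ.liftT (d + 1))

def Idx.substT (d : ℕ) (u : Ty) : Idx → Idx
  | .base τ => .base (τ.substT d u)
  | .pred τ σ => .pred (τ.substT d u) (σ.substT d u)
  | .all κ σ => .all κ (σ.substT (d + 1) (u.liftT 0))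

/-- Programs: variables, type/term abstraction and application, return, bind. -/
inductive Prog : Type
  | var : ℕ → Prog
  | tlam : Kd → Prog → Prog
  | lam : Ty → Prog → Prog
  | tapp : Prog → Ty → Prog
  | app : Prog → Prog → Prog
  | ret : Prog → Prog
  | bind : Prog → Prog → Prog

/-- Lift program variables. -/
def Prog.liftP (d : ℕ) : Prog → Prog
  | .var n => if n < d then .var n else .var (n + 1)
  | .tlam κ p => .tlam κ (p.liftP d)
  | .lam τ p => .lam τ (p.liftP (d + 1))
  | .tapp p τ => .tapp (p.liftP d) τ
  | .app p q => .app (p.liftP d) (q.liftP d)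
  | .ret p => .ret (p.liftP d)
  | .bind p q => .bind (p.liftP d) (q.liftP (d + 1))

/-- Lift type variables inside a program. -/
def Prog.liftT (d : ℕ) : Prog → Prog
  | .var n => .var n
  | .tlam κ p => .tlam κ (p.liftT (d + 1))
  | .lam τ p => .lam (τ.liftT d) (p.liftT d)
  | .tapp p τ => .tapp (p.liftT d) (τ.liftT d)
  | .app p q => .app (p.liftT d) (q.liftT d)
  | .ret p => .ret (p.liftT d)
  | .bind p q => .bind (p.liftT d) (q.liftT d)

/-- Substitute a program for a program variable. -/
def Prog.substP (d : ℕ) (u : Prog) : Prog → Prog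
  | .var n => if n < d then .var n else if n = d then u else .var (n - 1)
  | .tlam κ p => .tlam κ (Prog.substP d (u.liftT 0) p)
  | .lam τ p => .lam τ (Prog.substP (d + 1) (u.liftP 0) p)
  | .tapp p τ => .tapp (Prog.substP d u p) τ
  | .app p q => .app (Prog.substP d u p) (Prog.substP d u q)
  | .ret p => .ret (Prog.substP d u p)
  | .bind p q => .bind (Prog.substP d u p) (Prog.substP (d + 1) (u.liftP 0) q)

/-- Substitute a type for a type variable in a program. -/
def Prog.substT (d : ℕ) (u : Ty) : Prog → Prog
  | .var n => .var n
  | .tlam κ p => .tlam κ (p.substT (d + 1) (u.liftT 0))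
  | .lam τ p => .lam (τ.substT d u) (p.substT d u)
  | .tapp p τ => .tapp (p.substT d u) (τ.substT d u)
  | .app p q => .app (p.substT d u) (q.substT d u)
  | .ret p => .ret (p.substT d u)
  | .bind p q => .bind (p.substT d u) (q.substT d u)

mutual
  /-- Expressions: variables, comprehension (binding a program variable and an
  expression variable), base comprehension (binding a program variable), type
  abstraction and type application. -/
  inductive Expr : Type
    | var : ℕ → Expr
    | comp : Ty → Idx → Spec → Expr
    | compBase : Ty → Spec → Expr
    | tlam : Kd → Expr → Expr
    | tapp : Expr → Ty → Expr

  /-- Specifications: membership, base membership, implication, the monadic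
  modality `[p ▷ x]φ` (binding a program variable in `φ`), and universal
  quantification over types, programs, and expressions. -/
  inductive Spec : Type
    | mem : Prog → Expr → Expr → Spec
    | memBase : Prog → Expr → Spec
    | imp : Spec → Spec → Spec
    | after : Prog → Spec → Spec
    | allTy : Kd → Spec → Spec
    | allProg : Ty → Spec → Spec
    | allExpr : Idx → Spec → Spec
end

mutual
  def Expr.liftE (d : ℕ) : Expr → Expr
    | .var n => if n < d then .var n else .var (n + 1)
    | .comp τ σ φ => .comp τ σ (Spec.liftE (d + 1) φ)
    | .compBase τ φ => .compBase τ (Spec.liftE d φ)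
    | .tlam κ e => .tlam κ (Expr.liftE d e)
    | .tapp e τ => .tapp (Expr.liftE d e) τ

  def Spec.liftE (d : ℕ) : Spec → Spec
    | .mem p c a => .mem p (Expr.liftE d c) (Expr.liftE d a)
    | .memBase p e => .memBase p (Expr.liftE d e)
    | .imp a b => .imp (Spec.liftE d a) (Spec.liftE d b)
    | .after p φ => .after p (Spec.liftE d φ)
    | .allTy κ φ => .allTy κ (Spec.liftE d φ)
    | .allProg τ φ => .allProg τ (Spec.liftE d φ)
    | .allExpr σ φ => .allExpr σ (Spec.liftE (d + 1) φ)
end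

mutual
  def Expr.liftP (d : ℕ) : Expr → Expr
    | .var n => .var n
    | .comp τ σ φ => .comp τ σ (Spec.liftP (d + 1) φ)
    | .compBase τ φ => .compBase τ (Spec.liftP (d + 1) φ)
    | .tlam κ e => .tlam κ (Expr.liftP d e)
    | .tapp e τ => .tapp (Expr.liftP d e) τ

  def Spec.liftP (d : ℕ) : Spec → Spec
    | .mem p c a => .mem (p.liftP d) (Expr.liftP d c) (Expr.liftP d a)
    | .memBase p e => .memBase (p.liftP d) (Expr.liftP d e)
    | .imp a b => .imp (Spec.liftP d a) (Spec.liftP d b)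
    | .after p φ => .after (p.liftP d) (Spec.liftP (d + 1) φ)
    | .allTy κ φ => .allTy κ (Spec.liftP d φ)
    | .allProg τ φ => .allProg τ (Spec.liftP (d + 1) φ)
    | .allExpr σ φ => .allExpr σ (Spec.liftP d φ)
end

mutual
  def Expr.liftT (d : ℕ) : Expr → Expr
    | .var n => .var n
    | .comp τ σ φ => .comp (τ.liftT d) (σ.liftT d) (Spec.liftT d φ)
    | .compBase τ φ => .compBase (τ.liftT d) (Spec.liftT d φ)
    | .tlam κ e => .tlam κ (Expr.liftT (d + 1) e)
    | .tapp e τ => .tapp (Expr.liftT d e) (τ.liftT d)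

  def Spec.liftT (d : ℕ) : Spec → Spec
    | .mem p c a => .mem (p.liftT d) (Expr.liftT d c) (Expr.liftT d a)
    | .memBase p e => .memBase (p.liftT d) (Expr.liftT d e)
    | .imp a b => .imp (Spec.liftT d a) (Spec.liftT d b)
    | .after p φ => .after (p.liftT d) (Spec.liftT d φ)
    | .allTy κ φ => .allTy κ (Spec.liftT (d + 1) φ)
    | .allProg τ φ => .allProg (τ.liftT d) (Spec.liftT d φ)
    | .allExpr σ φ => .allExpr (σ.liftT d) (Spec.liftT d φ)
end

mutual
  def Expr.substE (d : ℕ) (u : Expr) : Expr → Expr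
    | .var n => if n < d then .var n else if n = d then u else .var (n - 1)
    | .comp τ σ φ => .comp τ σ (Spec.substE (d + 1) ((u.liftE 0).liftP 0) φ)
    | .compBase τ φ => .compBase τ (Spec.substE d (u.liftP 0) φ)
    | .tlam κ e => .tlam κ (Expr.substE d (u.liftT 0) e)
    | .tapp e τ => .tapp (Expr.substE d u e) τ

  def Spec.substE (d : ℕ) (u : Expr) : Spec → Spec
    | .mem p c a => .mem p (Expr.substE d u c) (Expr.substE d u a)
    | .memBase p e => .memBase p (Expr.substE d u e)
    | .imp a b => .imp (Spec.substE d u a) (Spec.substE d u b)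
    | .after p φ => .after p (Spec.substE d (u.liftP 0) φ)
    | .allTy κ φ => .allTy κ (Spec.substE d (u.liftT 0) φ)
    | .allProg τ φ => .allProg τ (Spec.substE d (u.liftP 0) φ)
    | .allExpr σ φ => .allExpr σ (Spec.substE (d + 1) (u.liftE 0) φ)
end

mutual
  def Expr.substP (d : ℕ) (u : Prog) : Expr → Expr
    | .var n => .var n
    | .comp τ σ φ => .comp τ σ (Spec.substP (d + 1) (u.liftP 0) φ)
    | .compBase τ φ => .compBase τ (Spec.substP (d + 1) (u.liftP 0) φ)
    | .tlam κ e => .tlam κ (Expr.substP d (u.liftT 0) e)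
    | .tapp e τ => .tapp (Expr.substP d u e) τ

  def Spec.substP (d : ℕ) (u : Prog) : Spec → Spec
    | .mem p c a => .mem (Prog.substP d u p) (Expr.substP d u c) (Expr.substP d u a)
    | .memBase p e => .memBase (Prog.substP d u p) (Expr.substP d u e)
    | .imp a b => .imp (Spec.substP d u a) (Spec.substP d u b)
    | .after p φ => .after (Prog.substP d u p) (Spec.substP (d + 1) (u.liftP 0) φ)
    | .allTy κ φ => .allTy κ (Spec.substP d (u.liftT 0) φ)
    | .allProg τ φ => .allProg τ (Spec.substP (d + 1) (u.liftP 0) φ)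
    | .allExpr σ φ => .allExpr σ (Spec.substP d u φ)
end

mutual
  def Expr.substT (d : ℕ) (u : Ty) : Expr → Expr
    | .var n => .var n
    | .comp τ σ φ => .comp (τ.substT d u) (σ.substT d u) (Spec.substT d u φ)
    | .compBase τ φ => .compBase (τ.substT d u) (Spec.substT d u φ)
    | .tlam κ e => .tlam κ (Expr.substT (d + 1) (u.liftT 0) e)
    | .tapp e τ => .tapp (Expr.substT d u e) (τ.substT d u)

  def Spec.substT (d : ℕ) (u : Ty) : Spec → Spec
    | .mem p c a => .mem (p.substT d u) (Expr.substT d u c) (Expr.substT d u a)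
    | .memBase p e => .memBase (p.substT d u) (Expr.substT d u e)
    | .imp a b => .imp (Spec.substT d u a) (Spec.substT d u b)
    | .after p φ => .after (p.substT d u) (Spec.substT d u φ)
    | .allTy κ φ => .allTy κ (Spec.substT (d + 1) (u.liftT 0) φ)
    | .allProg τ φ => .allProg (τ.substT d u) (Spec.substT d u φ)
    | .allExpr σ φ => .allExpr (σ.substT d u) (Spec.substT d u φ)
end

/-- The theory of the EffHOL-style extension: identity, implication, universal
quantification over programs, expressions and types, the monadic modality rules
(Mod-I, Mod-E, Mon), and (base) membership intro/elim. -/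
inductive EDeriv : List Spec → Spec → Prop
  | id {Φ φ} : φ ∈ Φ → EDeriv Φ φ
  | impI {Φ φ₁ φ₂} : EDeriv (φ₁ :: Φ) φ₂ → EDeriv Φ (.imp φ₁ φ₂)
  | impE {Φ φ₁ φ₂} : EDeriv Φ (.imp φ₁ φ₂) → EDeriv Φ φ₁ → EDeriv Φ φ₂
  | allProgI {Φ τ φ} : EDeriv (Φ.map (Spec.liftP 0)) φ → EDeriv Φ (.allProg τ φ)
  | allProgE {Φ τ φ} (p : Prog) : EDeriv Φ (.allProg τ φ) → EDeriv Φ (Spec.substP 0 p φ)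
  | allExprI {Φ σ φ} : EDeriv (Φ.map (Spec.liftE 0)) φ → EDeriv Φ (.allExpr σ φ)
  | allExprE {Φ σ φ} (e : Expr) : EDeriv Φ (.allExpr σ φ) → EDeriv Φ (Spec.substE 0 e φ)
  | allTyI {Φ κ φ} : EDeriv (Φ.map (Spec.liftT 0)) φ → EDeriv Φ (.allTy κ φ)
  | allTyE {Φ κ φ} (τ : Ty) : EDeriv Φ (.allTy κ φ) → EDeriv Φ (Spec.substT 0 τ φ)
  | modI {Φ φ} (p : Prog) : EDeriv Φ (Spec.substP 0 p φ) → EDeriv Φ (.after (.ret p) φ)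
  | modE {Φ p₁ p₂ φ} :
      EDeriv Φ (.after p₁ (.after p₂ (Spec.liftP 1 φ))) →
      EDeriv Φ (.after (.bind p₁ p₂) φ)
  | mon {Φ p φ₁ φ₂} :
      EDeriv (φ₁ :: Φ.map (Spec.liftP 0)) φ₂ →
      EDeriv Φ (.after p φ₁) → EDeriv Φ (.after p φ₂)
  | memI {Φ τ σ φ} (p : Prog) (a : Expr) :
      EDeriv Φ (Spec.substE 0 a (Spec.substP 0 p φ)) →
      EDeriv Φ (.mem p (.comp τ σ φ) a)
  | memE {Φ τ σ φ} (p : Prog) (a : Expr) :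
      EDeriv Φ (.mem p (.comp τ σ φ) a) →
      EDeriv Φ (Spec.substE 0 a (Spec.substP 0 p φ))
  | memBaseI {Φ τ φ} (p : Prog) :
      EDeriv Φ (Spec.substP 0 p φ) → EDeriv Φ (.memBase p (.compBase τ φ))
  | memBaseE {Φ τ φ} (p : Prog) :
      EDeriv Φ (.memBase p (.compBase τ φ)) → EDeriv Φ (Spec.substP 0 p φ)

/-! ## The forgetful erasure -/

/-- Erasure of indices to HOL sorts: it drops all type information. -/
def Idx.erase : Idx → HSrt
  | .base _ => .star
  | .pred _ σ => .pred σ.erase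
  | .all _ σ => σ.erase

mutual
  /-- Erasure of expressions to HOL terms. -/
  def Expr.erase : Expr → HTm
    | .var n => .var n
    | .comp _ σ φ => .comp σ.erase φ.erase
    | .compBase _ φ => .compBase φ.erase
    | .tlam _ e => e.erase
    | .tapp e _ => e.erase

  /-- Erasure of specifications to HOL propositions: it erases all program,
  type and kind structure, maps the modality `[p ▷ x]φ` to `⌊φ⌋`, program and
  type quantifiers to `⌊φ⌋`, and expression quantifiers `∀y:σ.φ` to
  `∀u_y:⌊σ⌋.⌊φ⌋`. -/
  def Spec.erase : Spec → HProp
    | .mem _ c a => .mem a.erase c.erase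
    | .memBase _ e => .memBase e.erase
    | .imp a b => .imp a.erase b.erase
    | .after _ φ => φ.erase
    | .allTy _ φ => φ.erase
    | .allProg _ φ => φ.erase
    | .allExpr σ φ => .all σ.erase φ.erase
end

/-! Erasure is invariant under lifting and substitution of programs and types, and commutes
with lifting and substitution of expressions. Hence every rule of the extension erases to a
rule of HOL or to no step at all, except `Mon`, which erases to a cut (`impI` then `impE`). -/

theorem Idx.erase_liftT (d : ℕ) (σ : Idx) : (σ.liftT d).erase = σ.erase := by
  induction σ generalizing d <;> simp_all [Idx.liftT, Idx.erase]

theorem Idx.erase_substT (d : ℕ) (u : Ty) (σ : Idx) : (σ.substT d u).erase = σ.erase := by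
  induction σ generalizing d u <;> simp_all [Idx.substT, Idx.erase]

mutual
  theorem Expr.erase_liftP (d : ℕ) (e : Expr) : (e.liftP d).erase = e.erase := by
    cases e <;> simp [Expr.liftP, Expr.erase, Spec.erase_liftP, Expr.erase_liftP]
  theorem Spec.erase_liftP (d : ℕ) (φ : Spec) : (φ.liftP d).erase = φ.erase := by
    cases φ <;> simp [Spec.liftP, Spec.erase, Spec.erase_liftP, Expr.erase_liftP]
end

mutual
  theorem Expr.erase_liftT (d : ℕ) (e : Expr) : (e.liftT d).erase = e.erase := by
    cases e <;> simp [Expr.liftT, Expr.erase, Spec.erase_liftT, Expr.erase_liftT,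
      Idx.erase_liftT]
  theorem Spec.erase_liftT (d : ℕ) (φ : Spec) : (φ.liftT d).erase = φ.erase := by
    cases φ <;> simp [Spec.liftT, Spec.erase, Spec.erase_liftT, Expr.erase_liftT,
      Idx.erase_liftT]
end

mutual
  theorem Expr.erase_liftE (d : ℕ) (e : Expr) : (e.liftE d).erase = e.erase.lift d := by
    cases e with
    | var n => by_cases h : n < d <;> simp [Expr.liftE, Expr.erase, HTm.lift, h]
    | _ => simp [Expr.liftE, Expr.erase, HTm.lift, Spec.erase_liftE, Expr.erase_liftE]
  theorem Spec.erase_liftE (d : ℕ) (φ : Spec) : (φ.liftE d).erase = φ.erase.lift d := by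
    cases φ <;> simp [Spec.liftE, Spec.erase, HProp.lift, Spec.erase_liftE, Expr.erase_liftE]
end

mutual
  theorem Expr.erase_substP (d : ℕ) (u : Prog) (e : Expr) :
      (e.substP d u).erase = e.erase := by
    cases e <;> simp [Expr.substP, Expr.erase, Spec.erase_substP, Expr.erase_substP]
  theorem Spec.erase_substP (d : ℕ) (u : Prog) (φ : Spec) :
      (φ.substP d u).erase = φ.erase := by
    cases φ <;> simp [Spec.substP, Spec.erase, Spec.erase_substP, Expr.erase_substP]
end

mutual
  theorem Expr.erase_substT (d : ℕ) (u : Ty) (e : Expr) :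
      (e.substT d u).erase = e.erase := by
    cases e <;> simp [Expr.substT, Expr.erase, Spec.erase_substT, Expr.erase_substT,
      Idx.erase_substT]
  theorem Spec.erase_substT (d : ℕ) (u : Ty) (φ : Spec) :
      (φ.substT d u).erase = φ.erase := by
    cases φ <;> simp [Spec.substT, Spec.erase, Spec.erase_substT, Expr.erase_substT,
      Idx.erase_substT]
end

mutual
  theorem Expr.erase_substE (d : ℕ) (u e : Expr) :
      (Expr.substE d u e).erase = HTm.subst d u.erase e.erase := by
    cases e with
    | var n =>
      by_cases h₁ : n < d <;> by_cases h₂ : n = d <;>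
        simp [Expr.substE, Expr.erase, HTm.subst, h₁, h₂]
    | _ =>
      simp [Expr.substE, Expr.erase, HTm.subst, Spec.erase_substE, Expr.erase_substE,
        Expr.erase_liftP, Expr.erase_liftT, Expr.erase_liftE]
  theorem Spec.erase_substE (d : ℕ) (u : Expr) (φ : Spec) :
      (Spec.substE d u φ).erase = HProp.subst d u.erase φ.erase := by
    cases φ <;> simp [Spec.substE, Spec.erase, HProp.subst, Spec.erase_substE,
      Expr.erase_substE, Expr.erase_liftP, Expr.erase_liftT, Expr.erase_liftE]
end

theorem Spec.map_erase_liftP (d : ℕ) (Φ : List Spec) :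
    (Φ.map (Spec.liftP d)).map Spec.erase = Φ.map Spec.erase := by
  simp [Function.comp_def, Spec.erase_liftP]

theorem Spec.map_erase_liftT (d : ℕ) (Φ : List Spec) :
    (Φ.map (Spec.liftT d)).map Spec.erase = Φ.map Spec.erase := by
  simp [Function.comp_def, Spec.erase_liftT]

theorem Spec.map_erase_liftE (d : ℕ) (Φ : List Spec) :
    (Φ.map (Spec.liftE d)).map Spec.erase = (Φ.map Spec.erase).map (HProp.lift d) := by
  simp [Function.comp_def, Spec.erase_liftE]

theorem EDeriv.erase {Φ : List Spec} {φ : Spec} (h : EDeriv Φ φ) :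
    HDeriv (Φ.map Spec.erase) φ.erase := by
  induction h with
  | id hφ => exact .id (List.mem_map_of_mem hφ)
  | impI _ ih => exact .impI ih
  | impE _ _ ih₁ ih₂ => exact .impE ih₁ ih₂
  | allProgI _ ih => rwa [Spec.map_erase_liftP] at ih
  | allProgE _ _ ih => rwa [Spec.erase_substP]
  | allExprI _ ih => exact .allI (by rwa [Spec.map_erase_liftE] at ih)
  | allExprE e _ ih => rw [Spec.erase_substE]; exact .allE e.erase ih
  | allTyI _ ih => rwa [Spec.map_erase_liftT] at ih
  | allTyE _ _ ih => rwa [Spec.erase_substT]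
  | modI _ _ ih => rwa [Spec.erase_substP] at ih
  | modE _ ih => rwa [Spec.erase, Spec.erase, Spec.erase_liftP] at ih
  | mon _ _ ih₁ ih₂ =>
    rw [List.map_cons, Spec.map_erase_liftP] at ih₁
    exact .impE (.impI ih₁) ih₂
  | memI _ _ _ ih => rw [Spec.erase_substE, Spec.erase_substP] at ih; exact .memI ih
  | memE _ _ _ ih => rw [Spec.erase_substE, Spec.erase_substP]; exact .memE ih
  | memBaseI _ _ ih => rw [Spec.erase_substP] at ih; exact .memBaseI ih
  | memBaseE _ _ ih => rw [Spec.erase_substP]; exact .memBaseE ih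

/-- The forgetful erasure from the EffHOL-style extension to HOL preserves
derivability; consequently, if intuitionistic HOL is consistent (`⊬ ⊥` with
`⊥ := ∀u:⋆. u↑`), then the extension is consistent as well: no specification
erasing to `⊥` is derivable. -/
theorem erasure_preserves_derivability_and_consistency :
    (∀ (Φ : List Spec) (φ : Spec), EDeriv Φ φ → HDeriv (Φ.map Spec.erase) φ.erase) ∧
    (¬ HDeriv [] hbot → ∀ φ : Spec, φ.erase = hbot → ¬ EDeriv [] φ) :=
  ⟨fun _ _ h => h.erase, fun hcon _ hφ h => hcon (hφ ▸ h.erase)⟩
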